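/- Let 0 < r < 1 and let A = {z ∈ ℂ : r < |z| < 1} be an annulus. Then every automorphism φ of A is of the form φ(z) = λz or φ(z) = λr/z for some λ ∈ ℂ with |λ| = 1. Consequently Aut(A) consists of two copies of the unit circle and in particular is compact: for any X ∈ A, the orbit {φ(X) : φ ∈ Aut(A)} has no accumulation point on ∂A. -/

import Mathlib

/-!
An automorphism `φ` of `A = {a < |z| < b}` is proper: it carries the filter of points leaving
every compact subset of `A` to itself, so `|φ z|` accumulates only at `a` and `b` as `z` approaches
`∂A`. Each boundary collar is connected, hence along each boundary circle `|φ|` tends to a single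
radius, and the two circles cannot go to the same radius `c` (the maximum principle would force
`|φ| ≡ c`, yet `φ` maps into `A`). So either `φ z / z` or `φ z · z / (ab)` is holomorphic and
zero-free on `A` with modulus tending to `1` at `∂A`; the maximum principle applied to it and to
its reciprocal gives modulus `≡ 1`, so it is a unimodular constant. The orbit of `X` therefore
lies on the circles `|w| = |X|` and `|w| = ab/|X|`, a compact subset of `A`.
-/

open Set Complex Metric

noncomputable section

/-- `f` is a holomorphic automorphism of the domain `Ω`. -/
def IsAutomorphismOf (Ω : Set ℂ) (f : ℂ → ℂ) : Prop :=
  ∃ g : ℂ → ℂ, MapsTo f Ω Ω ∧ MapsTo g Ω Ω ∧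
    DifferentiableOn ℂ f Ω ∧ DifferentiableOn ℂ g Ω ∧
    EqOn (g ∘ f) id Ω ∧ EqOn (f ∘ g) id Ω

open Filter Topology

theorem Filter.Tendsto.of_sup_of_eventually_mem {α β : Type*} {f : α → β} {l : Filter α}
    {la lb : Filter β} (h : Tendsto f l (la ⊔ lb)) {U : Set β} (hU : ∀ᶠ x in l, f x ∈ U)
    (hUb : Uᶜ ∈ lb) : Tendsto f l la := by
  refine (tendsto_inf.2 ⟨h, tendsto_principal.2 hU⟩).mono_right ?_
  rw [inf_sup_right, inf_principal_eq_bot.2 hUb, sup_bot_eq]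
  exact inf_le_left

theorem Filter.Tendsto.nhds_or_nhds_of_isPreconnected {X Y ι : Type*} [TopologicalSpace X]
    [TopologicalSpace Y] [T2Space Y] {f : X → Y} {l : Filter X} {p : ι → Prop} {s : ι → Set X}
    (hl : l.HasBasis p s) (hs : ∀ i, p i → IsPreconnected (s i)) {S : Set X} (hS : S ∈ l)
    (hf : ContinuousOn f S) {a b : Y} (hab : a ≠ b) (h : Tendsto f l (𝓝 a ⊔ 𝓝 b)) :
    Tendsto f l (𝓝 a) ∨ Tendsto f l (𝓝 b) := by
  obtain ⟨U, V, hU, hV, haU, hbV, hUV⟩ := t2_separation hab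
  have hUV_mem : f ⁻¹' (U ∪ V) ∩ S ∈ l :=
    inter_mem (h (union_mem_sup (hU.mem_nhds haU) (hV.mem_nhds hbV))) hS
  obtain ⟨i, hi, hsub⟩ := hl.mem_iff.1 hUV_mem
  have himg : IsPreconnected (f '' s i) :=
    (hs i hi).image f (hf.mono (hsub.trans inter_subset_right))
  rcases himg.subset_or_subset hU hV hUV (image_subset_iff.2 (hsub.trans inter_subset_left))
    with hsU | hsV
  · exact Or.inl <| h.of_sup_of_eventually_mem
      (mem_of_superset (hl.mem_of_mem hi) fun x hx => hsU ⟨x, hx, rfl⟩)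
      (mem_of_superset (hV.mem_nhds hbV) hUV.subset_compl_left)
  · exact Or.inr <| (sup_comm (𝓝 a) (𝓝 b) ▸ h).of_sup_of_eventually_mem
      (mem_of_superset (hl.mem_of_mem hi) fun x hx => hsV ⟨x, hx, rfl⟩)
      (mem_of_superset (hU.mem_nhds haU) hUV.subset_compl_right)

section BoundaryFilter

variable {X : Type*} [TopologicalSpace X]

def boundaryFilter (U : Set X) : Filter X := map (↑) (cocompact U)

theorem mem_boundaryFilter {U s : Set X} :
    s ∈ boundaryFilter U ↔ ∃ K, IsCompact K ∧ K ⊆ U ∧ U \ K ⊆ s := by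
  simp only [boundaryFilter, mem_map, mem_cocompact]
  constructor
  · rintro ⟨t, ht, hts⟩
    refine ⟨(↑) '' t, ht.image continuous_subtype_val, Subtype.coe_image_subset U t, ?_⟩
    rintro x ⟨hxU, hxt⟩
    exact hts fun h => hxt ⟨⟨x, hxU⟩, h, rfl⟩
  · rintro ⟨K, hK, hKU, hKs⟩
    refine ⟨((↑) : U → X) ⁻¹' K, ?_, fun x hx => hKs ⟨x.2, hx⟩⟩
    rwa [Subtype.isCompact_iff, Subtype.image_preimage_coe, inter_eq_right.2 hKU]

theorem self_mem_boundaryFilter (U : Set X) : U ∈ boundaryFilter U :=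
  mem_boundaryFilter.2 ⟨∅, isCompact_empty, empty_subset U, sdiff_subset⟩

theorem tendsto_boundaryFilter_of_leftInvOn {Y : Type*} [TopologicalSpace Y] {U : Set X}
    {V : Set Y} {φ : X → Y} {ψ : Y → X} (hφ : MapsTo φ U V) (hψ : MapsTo ψ V U)
    (hψc : ContinuousOn ψ V) (hinv : LeftInvOn ψ φ U) :
    Tendsto φ (boundaryFilter U) (boundaryFilter V) := by
  intro s hs
  obtain ⟨K, hK, hKV, hVs⟩ := mem_boundaryFilter.1 hs
  refine mem_boundaryFilter.2 ⟨ψ '' K, hK.image_of_continuousOn (hψc.mono hKV),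
    image_subset_iff.2 (hψ.mono_left hKV), ?_⟩
  rintro z ⟨hzU, hzK⟩
  exact hVs ⟨hφ hzU, fun h => hzK ⟨φ z, h, hinv hzU⟩⟩

theorem IsOpen.not_isCompact [PreconnectedSpace X] [NoncompactSpace X] [T2Space X]
    {U : Set X} (ho : IsOpen U) (hne : U.Nonempty) : ¬IsCompact U := fun hc =>
  hc.ne_univ ((isClopen_iff.1 ⟨hc.isClosed, ho⟩).resolve_left hne.ne_empty)

end BoundaryFilter

theorem IsAutomorphismOf.tendsto_boundaryFilter {U : Set ℂ} {φ : ℂ → ℂ}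
    (hφ : IsAutomorphismOf U φ) : Tendsto φ (boundaryFilter U) (boundaryFilter U) :=
  let ⟨_, hφU, hψU, _, hψ, hinv, _⟩ := hφ
  tendsto_boundaryFilter_of_leftInvOn hφU hψU hψ.continuousOn hinv

section MaximumModulus

variable {E F : Type*} [NormedAddCommGroup E] [NormedSpace ℂ E] [Nontrivial E]
  [NormedAddCommGroup F] [NormedSpace ℂ F] [StrictConvexSpace ℝ F]

theorem norm_le_of_tendsto_boundaryFilter {U : Set E} (hc : IsPreconnected U) (ho : IsOpen U)
    {g : E → F} (hg : DifferentiableOn ℂ g U) {C : ℝ}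
    (h : Tendsto (‖g ·‖) (boundaryFilter U) (𝓝 C)) {z : E} (hz : z ∈ U) : ‖g z‖ ≤ C := by
  by_contra! hlt
  obtain ⟨K, hK, hKU, hUK⟩ := mem_boundaryFilter.1 (h (gt_mem_nhds hlt))
  have hzK : z ∈ K := by_contra fun hzK => lt_irrefl ‖g z‖ (hUK ⟨hz, hzK⟩)
  obtain ⟨w, hwK, hwmax⟩ := hK.exists_isMaxOn ⟨z, hzK⟩ (hg.continuousOn.mono hKU).norm
  have hzw : ‖g z‖ ≤ ‖g w‖ := hwmax hzK
  have hwU : IsMaxOn (norm ∘ g) U w := fun y hy => by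
    by_cases hyK : y ∈ K
    · exact hwmax hyK
    · exact ((hUK ⟨hy, hyK⟩ : ‖g y‖ < ‖g z‖).trans_le hzw).le
  have hconst := Complex.eqOn_of_isPreconnected_of_isMaxOn_norm hc ho hg (hKU hwK) hwU
  obtain ⟨y, hyU, hyK⟩ : (U \ K).Nonempty := sdiff_nonempty.2 fun hUK' =>
    ho.not_isCompact ⟨z, hz⟩ (by rwa [hUK'.antisymm hKU])
  have hy : ‖g y‖ < ‖g z‖ := hUK ⟨hyU, hyK⟩
  rw [hconst hyU] at hy
  exact hy.not_ge hzw

theorem exists_norm_eq_one_eqOn_const_of_tendsto_boundaryFilter {U : Set E}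
    (hc : IsPreconnected U) (ho : IsOpen U) {g : E → ℂ} (hg : DifferentiableOn ℂ g U)
    (hg0 : ∀ z ∈ U, g z ≠ 0) (h : Tendsto (‖g ·‖) (boundaryFilter U) (𝓝 1)) :
    ∃ lam : ℂ, ‖lam‖ = 1 ∧ EqOn g (fun _ => lam) U := by
  rcases U.eq_empty_or_nonempty with rfl | ⟨c, hcU⟩
  · exact ⟨1, norm_one, eqOn_empty _ _⟩
  have hnorm : ∀ z ∈ U, ‖g z‖ = 1 := fun z hz => by
    have hle := norm_le_of_tendsto_boundaryFilter hc ho hg h hz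
    have hinv : ‖(g z)⁻¹‖ ≤ 1 := norm_le_of_tendsto_boundaryFilter (g := fun z => (g z)⁻¹)
      hc ho (hg.inv hg0) (by simpa only [norm_inv, inv_one] using h.inv₀ one_ne_zero) hz
    rw [norm_inv, inv_le_one₀ (norm_pos_iff.2 (hg0 z hz))] at hinv
    exact le_antisymm hle hinv
  refine ⟨g c, hnorm c hcU, Complex.eqOn_of_isPreconnected_of_isMaxOn_norm hc ho hg hcU ?_⟩
  exact fun z hz => (hnorm z hz).trans_le (hnorm c hcU).ge

end MaximumModulus

theorem Complex.isPreconnected_preimage_norm {S : Set ℝ} (hS : S.OrdConnected) :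
    IsPreconnected ((‖·‖) ⁻¹' S : Set ℂ) := by
  have hpolar : ((‖·‖) ⁻¹' S : Set ℂ) =
      (fun p : ℝ × ℝ => (p.1 : ℂ) * exp (p.2 * I)) '' ((S ∩ Ici 0) ×ˢ univ) := by
    ext z
    refine ⟨fun hz => ⟨(‖z‖, arg z), ⟨⟨hz, norm_nonneg z⟩, trivial⟩, norm_mul_exp_arg_mul_I z⟩, ?_⟩
    rintro ⟨⟨ρ, θ⟩, ⟨⟨hρS, hρ0 : 0 ≤ ρ⟩, -⟩, rfl⟩
    simpa [norm_exp_ofReal_mul_I, abs_of_nonneg hρ0] using hρS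
  rw [hpolar]
  exact ((hS.inter ordConnected_Ici).isPreconnected.prod isPreconnected_univ).image _
    (by fun_prop)

def annulus (a b : ℝ) : Set ℂ := {z | a < ‖z‖ ∧ ‖z‖ < b}

section Annulus

variable {a b : ℝ}

theorem isOpen_annulus (a b : ℝ) : IsOpen (annulus a b) :=
  isOpen_Ioo.preimage continuous_norm

theorem isPreconnected_annulus (a b : ℝ) : IsPreconnected (annulus a b) :=
  isPreconnected_preimage_norm ordConnected_Ioo

theorem ne_zero_of_mem_annulus (ha : 0 ≤ a) {z : ℂ} (hz : z ∈ annulus a b) : z ≠ 0 :=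
  norm_pos_iff.1 (ha.trans_lt hz.1)

theorem boundaryFilter_annulus (hab : a < b) :
    boundaryFilter (annulus a b) = comap (‖·‖) (𝓝[>] a) ⊔ comap (‖·‖) (𝓝[<] b) := by
  refine le_antisymm (fun s hs => ?_) ?_
  · obtain ⟨⟨t, ht, hts⟩, ⟨t', ht', hts'⟩⟩ := mem_sup.1 hs
    obtain ⟨u, hu, hut⟩ := mem_nhdsGT_iff_exists_Ioo_subset.1 ht
    obtain ⟨l, hl, hlt⟩ := mem_nhdsLT_iff_exists_Ioo_subset.1 ht'
    refine mem_boundaryFilter.2 ⟨(‖·‖) ⁻¹' Icc u l, ?_,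
      fun z hz => ⟨lt_of_lt_of_le hu hz.1, hz.2.trans_lt hl⟩, ?_⟩
    · exact (isCompact_closedBall 0 l).of_isClosed_subset
        (isClosed_Icc.preimage continuous_norm) fun z hz => mem_closedBall_zero_iff.2 hz.2
    · rintro z ⟨⟨hza, hzb⟩, hzK⟩
      rcases lt_or_ge ‖z‖ u with hzu | hzu
      · exact hts (hut ⟨hza, hzu⟩)
      · exact hts' (hlt ⟨lt_of_not_ge fun hzl => hzK ⟨hzu, hzl⟩, hzb⟩)
  have hcollar : ∀ s ∈ boundaryFilter (annulus a b), ∃ T : Set ℝ, IsClosed T ∧ a ∉ T ∧ b ∉ T ∧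
      (‖·‖) ⁻¹' (Ioo a b \ T) ⊆ s := fun s hs => by
    obtain ⟨K, hK, hKA, hAs⟩ := mem_boundaryFilter.1 hs
    refine ⟨(‖·‖) '' K, (hK.image continuous_norm).isClosed, ?_, ?_, ?_⟩
    · rintro ⟨z, hz, hza⟩; exact (hKA hz).1.ne' hza
    · rintro ⟨z, hz, hzb⟩; exact (hKA hz).2.ne hzb
    · exact fun z hz => hAs ⟨hz.1, fun hzK => hz.2 ⟨z, hzK, rfl⟩⟩
  refine sup_le (fun s hs => ?_) (fun s hs => ?_) <;>
    obtain ⟨T, hT, haT, hbT, hTs⟩ := hcollar s hs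
  · exact ⟨_, inter_mem (Ioo_mem_nhdsGT hab)
      (mem_nhdsWithin_of_mem_nhds (hT.compl_mem_nhds haT)), hTs⟩
  · exact ⟨_, inter_mem (Ioo_mem_nhdsLT hab)
      (mem_nhdsWithin_of_mem_nhds (hT.compl_mem_nhds hbT)), hTs⟩

theorem tendsto_norm_boundaryFilter_annulus (hab : a < b) :
    Tendsto (‖·‖) (boundaryFilter (annulus a b)) (𝓝 a ⊔ 𝓝 b) := by
  rw [boundaryFilter_annulus hab]
  exact (tendsto_comap.mono_right nhdsWithin_le_nhds).sup_sup
    (tendsto_comap.mono_right nhdsWithin_le_nhds)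

theorem exists_norm_eq_one_eqOn_const_annulus (hab : a < b) {g : ℂ → ℂ}
    (hg : DifferentiableOn ℂ g (annulus a b)) (hg0 : ∀ z ∈ annulus a b, g z ≠ 0)
    (hin : Tendsto (‖g ·‖) (comap (‖·‖) (𝓝[>] a)) (𝓝 1))
    (hout : Tendsto (‖g ·‖) (comap (‖·‖) (𝓝[<] b)) (𝓝 1)) :
    ∃ lam : ℂ, ‖lam‖ = 1 ∧ EqOn g (fun _ => lam) (annulus a b) :=
  exists_norm_eq_one_eqOn_const_of_tendsto_boundaryFilter (isPreconnected_annulus a b)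
    (isOpen_annulus a b) hg hg0 (boundaryFilter_annulus hab ▸ hin.sup hout)

theorem norm_eq_of_tendsto_annulus (hab : a < b) {g : ℂ → ℂ}
    (hg : DifferentiableOn ℂ g (annulus a b)) (hg0 : ∀ z ∈ annulus a b, g z ≠ 0) {c : ℝ}
    (hc : 0 < c) (hin : Tendsto (‖g ·‖) (comap (‖·‖) (𝓝[>] a)) (𝓝 c))
    (hout : Tendsto (‖g ·‖) (comap (‖·‖) (𝓝[<] b)) (𝓝 c)) {z : ℂ} (hz : z ∈ annulus a b) :
    ‖g z‖ = c := by
  have hnorm : ∀ w, ‖g w / c‖ = ‖g w‖ / c := fun w => by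
    rw [norm_div, norm_real, Real.norm_of_nonneg hc.le]
  obtain ⟨lam, hlam, hg_eq⟩ := exists_norm_eq_one_eqOn_const_annulus hab
    (hg.div_const (c : ℂ)) (fun w hw => div_ne_zero (hg0 w hw) (ofReal_ne_zero.2 hc.ne'))
    (by simpa only [hnorm, div_self hc.ne'] using hin.div_const c)
    (by simpa only [hnorm, div_self hc.ne'] using hout.div_const c)
  have := hnorm z
  rwa [show g z / c = lam from hg_eq hz, hlam, eq_comm, div_eq_one_iff_eq hc.ne'] at this

theorem IsAutomorphismOf.tendsto_norm_nhds_or (hab : a < b) {φ : ℂ → ℂ}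
    (hφ : IsAutomorphismOf (annulus a b) φ) {l : Filter ℂ} {ι : Type*} {p : ι → Prop}
    {s : ι → Set ℂ} (hl : l.HasBasis p s) (hs : ∀ i, p i → IsPreconnected (s i))
    (hlA : l ≤ boundaryFilter (annulus a b)) :
    Tendsto (‖φ ·‖) l (𝓝 a) ∨ Tendsto (‖φ ·‖) l (𝓝 b) :=
  have ⟨_, _, _, hφd, _⟩ := hφ
  ((tendsto_norm_boundaryFilter_annulus hab).comp (hφ.tendsto_boundaryFilter.mono_left hlA)
    ).nhds_or_nhds_of_isPreconnected hl hs (hlA (self_mem_boundaryFilter _))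
    hφd.continuousOn.norm hab.ne

theorem exists_eqOn_rotation_of_tendsto_annulus (ha : 0 < a) (hab : a < b) {g : ℂ → ℂ}
    (hg : DifferentiableOn ℂ g (annulus a b)) (hg0 : ∀ z ∈ annulus a b, g z ≠ 0)
    (hin : Tendsto (‖g ·‖) (comap (‖·‖) (𝓝[>] a)) (𝓝 a))
    (hout : Tendsto (‖g ·‖) (comap (‖·‖) (𝓝[<] b)) (𝓝 b)) :
    ∃ lam : ℂ, ‖lam‖ = 1 ∧ EqOn g (fun z => lam * z) (annulus a b) := by
  have hb : 0 < b := ha.trans hab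
  have hz0 : ∀ z ∈ annulus a b, z ≠ 0 := fun z => ne_zero_of_mem_annulus ha.le
  obtain ⟨lam, hlam, hconst⟩ := exists_norm_eq_one_eqOn_const_annulus hab
    (g := fun z => g z / z) (hg.div differentiableOn_id hz0)
    (fun z hz => div_ne_zero (hg0 z hz) (hz0 z hz))
    (by simpa only [Pi.div_def, norm_div, div_self ha.ne']
      using hin.div (tendsto_comap.mono_right nhdsWithin_le_nhds) ha.ne')
    (by simpa only [Pi.div_def, norm_div, div_self hb.ne']
      using hout.div (tendsto_comap.mono_right nhdsWithin_le_nhds) hb.ne')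
  exact ⟨lam, hlam, fun z hz => (div_eq_iff (hz0 z hz)).1 (hconst hz)⟩

theorem exists_eqOn_inversion_of_tendsto_annulus (ha : 0 < a) (hab : a < b) {g : ℂ → ℂ}
    (hg : DifferentiableOn ℂ g (annulus a b)) (hg0 : ∀ z ∈ annulus a b, g z ≠ 0)
    (hin : Tendsto (‖g ·‖) (comap (‖·‖) (𝓝[>] a)) (𝓝 b))
    (hout : Tendsto (‖g ·‖) (comap (‖·‖) (𝓝[<] b)) (𝓝 a)) :
    ∃ lam : ℂ, ‖lam‖ = 1 ∧ EqOn g (fun z => lam * a * b / z) (annulus a b) := by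
  have hb : 0 < b := ha.trans hab
  have hz0 : ∀ z ∈ annulus a b, z ≠ 0 := fun z => ne_zero_of_mem_annulus ha.le
  have hab0 : (a * b : ℂ) ≠ 0 := mul_ne_zero (ofReal_ne_zero.2 ha.ne') (ofReal_ne_zero.2 hb.ne')
  have hnorm : ∀ z, ‖g z * z / (a * b)‖ = ‖g z‖ * ‖z‖ / (a * b) := fun z => by
    rw [norm_div, norm_mul, norm_mul, norm_real, norm_real, Real.norm_of_nonneg ha.le,
      Real.norm_of_nonneg hb.le]
  obtain ⟨lam, hlam, hconst⟩ := exists_norm_eq_one_eqOn_const_annulus hab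
    (g := fun z => g z * z / (a * b)) ((hg.mul differentiableOn_id).div_const _)
    (fun z hz => div_ne_zero (mul_ne_zero (hg0 z hz) (hz0 z hz)) hab0)
    (by simpa only [hnorm, mul_comm b a, div_self (by positivity : a * b ≠ 0)]
      using (hin.mul (tendsto_comap.mono_right nhdsWithin_le_nhds)).div_const (a * b))
    (by simpa only [hnorm, div_self (by positivity : a * b ≠ 0)]
      using (hout.mul (tendsto_comap.mono_right nhdsWithin_le_nhds)).div_const (a * b))
  refine ⟨lam, hlam, fun z hz => ?_⟩
  rw [eq_div_iff (hz0 z hz), (div_eq_iff hab0).1 (hconst hz)]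
  ring

theorem IsAutomorphismOf.eq_rotation_or_inversion (ha : 0 < a) (hab : a < b) {φ : ℂ → ℂ}
    (hφ : IsAutomorphismOf (annulus a b) φ) :
    ∃ lam : ℂ, ‖lam‖ = 1 ∧ (EqOn φ (fun z => lam * z) (annulus a b) ∨
      EqOn φ (fun z => lam * a * b / z) (annulus a b)) := by
  have ⟨_, hφA, _, hφd, _⟩ := hφ
  have hφ0 : ∀ z ∈ annulus a b, φ z ≠ 0 := fun z hz => ne_zero_of_mem_annulus ha.le (hφA hz)
  have hin := hφ.tendsto_norm_nhds_or hab ((nhdsGT_basis a).comap _)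
    (fun _ _ => isPreconnected_preimage_norm ordConnected_Ioo)
    (boundaryFilter_annulus hab ▸ le_sup_left)
  have hout := hφ.tendsto_norm_nhds_or hab ((nhdsLT_basis b).comap _)
    (fun _ _ => isPreconnected_preimage_norm ordConnected_Ioo)
    (boundaryFilter_annulus hab ▸ le_sup_right)
  obtain ⟨z₀, hz₀⟩ : (annulus a b).Nonempty := ⟨((a + b) / 2 : ℝ), by
    simp only [annulus, mem_ofPred_eq, norm_real,
      Real.norm_of_nonneg (by linarith : 0 ≤ (a + b) / 2)]
    constructor <;> linarith⟩
  rcases hin with hin | hin <;> rcases hout with hout | hout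
  · exact ((hφA hz₀).1.ne' (norm_eq_of_tendsto_annulus hab hφd hφ0 ha hin hout hz₀)).elim
  · obtain ⟨lam, hlam, hrot⟩ := exists_eqOn_rotation_of_tendsto_annulus ha hab hφd hφ0 hin hout
    exact ⟨lam, hlam, Or.inl hrot⟩
  · obtain ⟨lam, hlam, hinv⟩ := exists_eqOn_inversion_of_tendsto_annulus ha hab hφd hφ0 hin hout
    exact ⟨lam, hlam, Or.inr hinv⟩
  · exact ((hφA hz₀).2.ne (norm_eq_of_tendsto_annulus hab hφd hφ0 (ha.trans hab) hin hout
      hz₀)).elim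

theorem closure_orbit_subset_annulus (ha : 0 < a) (hab : a < b) {X : ℂ}
    (hX : X ∈ annulus a b) :
    closure {w : ℂ | ∃ φ, IsAutomorphismOf (annulus a b) φ ∧ w = φ X} ⊆ annulus a b := by
  have hX0 : 0 < ‖X‖ := ha.trans hX.1
  have horbit : {w : ℂ | ∃ φ, IsAutomorphismOf (annulus a b) φ ∧ w = φ X} ⊆
      (‖·‖) ⁻¹' {‖X‖, a * b / ‖X‖} := by
    rintro _ ⟨φ, hφ, rfl⟩
    obtain ⟨lam, hlam, hrot | hinv⟩ := hφ.eq_rotation_or_inversion ha hab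
    · left
      change ‖φ X‖ = ‖X‖
      rw [hrot hX, norm_mul, hlam, one_mul]
    · right
      change ‖φ X‖ = a * b / ‖X‖
      rw [hinv hX, norm_div, norm_mul, norm_mul, hlam, one_mul, norm_real, norm_real,
        Real.norm_of_nonneg ha.le, Real.norm_of_nonneg (ha.trans hab).le]
  refine (closure_minimal horbit ((toFinite _).isClosed.preimage continuous_norm)).trans ?_
  rintro z (hz | hz : ‖z‖ = ‖X‖ ∨ ‖z‖ = a * b / ‖X‖)
  · rwa [annulus, mem_ofPred_eq, hz]
  · rw [annulus, mem_ofPred_eq, hz, lt_div_iff₀ hX0, div_lt_iff₀' hX0]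
    exact ⟨mul_lt_mul_of_pos_left hX.2 ha, mul_lt_mul_of_pos_right hX.1 (ha.trans hab)⟩

end Annulus

/-- Every automorphism of the annulus `A = {r < |z| < 1}` is a rotation `z ↦ λz` or an
inversion `z ↦ λr/z` with `|λ| = 1`; consequently `Aut(A)` is compact and no
automorphism orbit accumulates at the boundary of `A`. -/
theorem automorphisms_of_annulus (r : ℝ) (hr0 : 0 < r) (hr1 : r < 1)
    (A : Set ℂ) (hA : A = {z : ℂ | r < ‖z‖ ∧ ‖z‖ < 1}) :
    (∀ φ, IsAutomorphismOf A φ →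
      ∃ lam : ℂ, ‖lam‖ = 1 ∧
        (EqOn φ (fun z => lam * z) A ∨ EqOn φ (fun z => lam * (r : ℂ) / z) A)) ∧
    (∀ X ∈ A, ∀ P ∈ frontier A,
      P ∉ closure {w : ℂ | ∃ φ, IsAutomorphismOf A φ ∧ w = φ X}) := by
  obtain rfl : A = annulus r 1 := hA
  refine ⟨fun φ hφ => ?_, fun X hX P hP hPorbit => ?_⟩
  · simpa only [ofReal_one, mul_one] using hφ.eq_rotation_or_inversion hr0 hr1
  · rw [(isOpen_annulus r 1).frontier_eq] at hP
    exact hP.2 (closure_orbit_subset_annulus hr0 hr1 hX hPorbit)
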